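/- arXiv:1602.04260 — 4 statements merged into one kernel-verified Lean document; each statement's English description precedes it below -/
import Mathlib

section
/- Let M, r be positive integers with 1 ≤ r < M/2, and let p = r/M. Then the partial binomial sum satisfies ∑_{l=1}^{r} C(M,l) ≤ C(M,r)/(1-2p). -/
/-!
For `1 ≤ l ≤ r` consecutive binomial coefficients satisfy `C(M, l - 1) ≤ q · C(M, l)` with
`q = r / (M - r) < 1`, so the terms below `C(M, r)` are dominated by a geometric series and the
whole sum is at most `C(M, r) / (1 - q)`. Finally
`1 - q = (M - 2r)/(M - r) ≥ (M - 2r)/M = 1 - 2p`.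
-/

open Finset

theorem Nat.choose_mul_sub_le_choose_succ_mul {M k r : ℕ} (hk : k < r) :
    M.choose k * (M - r) ≤ M.choose (k + 1) * r :=
  calc M.choose k * (M - r) ≤ M.choose k * (M - k) := Nat.mul_le_mul_left _ (by omega)
    _ = M.choose (k + 1) * (k + 1) := (M.choose_succ_right_eq k).symm
    _ ≤ M.choose (k + 1) * r := Nat.mul_le_mul_left _ hk

theorem Nat.choose_le_div_mul_choose_succ {M k r : ℕ} (hk : k < r) (hrM : r < M) :
    (M.choose k : ℝ) ≤ r / (M - r) * M.choose (k + 1) := by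
  have hMr : (0 : ℝ) < M - r := sub_pos.2 (by exact_mod_cast hrM)
  rw [div_mul_eq_mul_div, le_div_iff₀ hMr, mul_comm (r : ℝ)]
  have h := Nat.choose_mul_sub_le_choose_succ_mul (M := M) hk
  rw [← Nat.cast_le (α := ℝ)] at h
  push_cast [Nat.cast_sub hrM.le] at h
  exact h

theorem sum_range_succ_le_div_one_sub_of_le_mul {K : Type*} [Field K] [LinearOrder K]
    [IsStrictOrderedRing K] {a : ℕ → K} {q : K}
    (hq₀ : 0 ≤ q) (hq₁ : q < 1) (ha₀ : 0 ≤ a 0) :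
    ∀ n, (∀ k < n, a k ≤ q * a (k + 1)) → ∑ k ∈ range (n + 1), a k ≤ a n / (1 - q)
  | 0, _ => by
    rw [sum_range_one, le_div_iff₀ (sub_pos.2 hq₁)]
    nlinarith
  | n + 1, ha => by
    have hq : 0 < 1 - q := sub_pos.2 hq₁
    have ih := sum_range_succ_le_div_one_sub_of_le_mul hq₀ hq₁ ha₀ n
      fun k hk => ha k (by omega)
    have hn := ha n n.lt_succ_self
    calc ∑ k ∈ range (n + 1 + 1), a k ≤ a n / (1 - q) + a (n + 1) := by
          rw [sum_range_succ]; gcongr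
      _ ≤ q * a (n + 1) / (1 - q) + a (n + 1) := by gcongr
      _ = a (n + 1) / (1 - q) := by field_simp; ring

theorem partial_binomial_sum_le_general (M r : ℕ) (hrM : (r : ℝ) < M / 2)
    (p : ℝ) (hp : p = (r : ℝ) / M) :
    (∑ l ∈ Finset.Icc 1 r, (M.choose l : ℝ)) ≤ (M.choose r : ℝ) / (1 - 2 * p) := by
  have hrM' : r < M := by exact_mod_cast (show (r : ℝ) < M by linarith)
  have hMr : (0 : ℝ) < M - r := by linarith
  have hM : (0 : ℝ) < M := by linarith
  set q : ℝ := r / (M - r)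
  have hq₁ : q < 1 := (div_lt_one hMr).2 (by linarith)
  have h_one_sub_le : 1 - 2 * p ≤ 1 - q := by
    rw [hp, sub_le_sub_iff_left, div_le_iff₀ hMr, mul_div_assoc', div_mul_eq_mul_div,
      le_div_iff₀ hM]
    nlinarith
  have hp₁ : 0 < 1 - 2 * p := by
    rw [hp, sub_pos, mul_div_assoc', div_lt_one hM]; linarith
  calc ∑ l ∈ Icc 1 r, (M.choose l : ℝ) ≤ ∑ l ∈ range (r + 1), (M.choose l : ℝ) :=
        sum_le_sum_of_subset_of_nonneg
          (fun l hl => by simp only [mem_Icc, mem_range] at hl ⊢; omega)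
          fun _ _ _ => Nat.cast_nonneg _
    _ ≤ M.choose r / (1 - q) :=
        sum_range_succ_le_div_one_sub_of_le_mul (a := fun l => (M.choose l : ℝ))
          (by positivity) hq₁ (Nat.cast_nonneg _) r
          fun _ hk => Nat.choose_le_div_mul_choose_succ hk hrM'
    _ ≤ M.choose r / (1 - 2 * p) :=
        div_le_div_of_nonneg_left (Nat.cast_nonneg _) hp₁ h_one_sub_le

theorem partial_binomial_sum_le (M r : ℕ) (hr : 1 ≤ r) (hrM : (r : ℝ) < M / 2)
    (p : ℝ) (hp : p = (r : ℝ) / M) :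
    (∑ l ∈ Finset.Icc 1 r, (M.choose l : ℝ)) ≤ (M.choose r : ℝ) / (1 - 2 * p) :=
  partial_binomial_sum_le_general M r hrM p hp
end

section
/- For every integer d > 1 and every real p with 0 < p < 1/2, the binary entropy function satisfies H(p) ≤ (2d / ln 2) · p^{1 - 1/d}. -/
noncomputable def binEntropy2 (p : ℝ) : ℝ := -p * Real.logb 2 p - (1 - p) * Real.logb 2 (1 - p)

/-!
Write the entropy in nats as `p log p⁻¹ + (1 - p) log (1 - p)⁻¹`. The first term is at most
`d p ^ (1 - 1/d)` by `log x ≤ d x ^ (1/d)`, the second at most `p ≤ p ^ (1 - 1/d)` by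
`log x ≤ x - 1`; dividing by `log 2` converts nats to bits.
-/

open Real

lemma binEntropy2_eq_binEntropy_div_log_two (p : ℝ) : binEntropy2 p = binEntropy p / log 2 := by
  rw [binEntropy2, binEntropy, logb, logb, log_inv, log_inv]
  ring

lemma mul_log_inv_le_rpow_div {x ε : ℝ} (hx : 0 < x) (hε : 0 < ε) :
    x * log x⁻¹ ≤ x ^ (1 - ε) / ε := calc
  x * log x⁻¹ ≤ x * (x⁻¹ ^ ε / ε) := by gcongr; exact log_le_rpow_div (by positivity) hε
  _ = x ^ (1 - ε) / ε := by
    rw [inv_rpow hx.le, ← rpow_neg hx.le, sub_eq_add_neg, rpow_add hx, rpow_one, mul_div_assoc]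

lemma mul_log_inv_le_one_sub {x : ℝ} (hx : 0 < x) : x * log x⁻¹ ≤ 1 - x := calc
  x * log x⁻¹ ≤ x * (x⁻¹ - 1) := by gcongr; exact log_le_sub_one_of_pos (by positivity)
  _ = 1 - x := by field_simp

lemma binEntropy_le_rpow_div_add {p ε : ℝ} (hp0 : 0 < p) (hp1 : p < 1) (hε : 0 < ε) :
    binEntropy p ≤ p ^ (1 - ε) / ε + p := by
  have hpow := mul_log_inv_le_rpow_div hp0 hε
  have hone := mul_log_inv_le_one_sub (sub_pos.2 hp1)
  rw [binEntropy]
  linarith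

lemma binEntropy_le_two_mul_rpow_div {p ε : ℝ} (hp0 : 0 < p) (hp1 : p < 1) (hε0 : 0 < ε)
    (hε1 : ε ≤ 1) : binEntropy p ≤ 2 * p ^ (1 - ε) / ε := by
  have hp_le : p ≤ p ^ (1 - ε) / ε :=
    (self_le_rpow_of_le_one hp0.le hp1.le (by linarith)).trans (le_div_self (by positivity) hε0 hε1)
  have := binEntropy_le_rpow_div_add hp0 hp1 hε0
  rw [mul_div_assoc]
  linarith

theorem entropy_power_bound (d : ℕ) (hd : 1 < d) (p : ℝ) (hp0 : 0 < p) (hp : p < 1 / 2) :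
    binEntropy2 p ≤ (2 * d / Real.log 2) * p ^ ((1 : ℝ) - 1 / d) := by
  have hd0 : (0 : ℝ) < d := by positivity
  have hd1 : (1 : ℝ) ≤ d := by exact_mod_cast hd.le
  have hbound := binEntropy_le_two_mul_rpow_div hp0 (by linarith) (one_div_pos.2 hd0)
    (div_le_one_of_le₀ hd1 hd0.le)
  rw [binEntropy2_eq_binEntropy_div_log_two, div_mul_eq_mul_div, div_le_div_iff_of_pos_right
    (log_pos one_lt_two)]
  calc binEntropy p ≤ 2 * p ^ (1 - 1 / (d : ℝ)) / (1 / d) := hbound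
    _ = 2 * d * p ^ (1 - 1 / (d : ℝ)) := by field_simp
end

section
/- Fix a constant T > 1 and let M = ⌈T·log₂ N⌉. Then there exist constants C > 0 and N₀ such that for all N ≥ N₀, every M × N binary matrix with pairwise distinct nonzero columns has l₀ cost at least C·N·log₂ N. -/
open Finset

open Finset

def l0cost (M N : ℕ) (A : Fin M → Fin N → Bool) : ℕ :=
  (Finset.univ.filter (fun p : Fin M × Fin N => A p.1 p.2 = true)).card

lemma l0_aux_pow_le (w : ℕ) : (w : ℝ) ^ w ≤ 3 ^ w * (w.factorial : ℝ) := by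
  induction w with
  | zero => simp
  | succ n ih =>
      rcases Nat.eq_zero_or_pos n with hn | hn
      · subst hn; norm_num
      have hnn : (0:ℝ) < n := by exact_mod_cast hn
      have h1 : ((n:ℝ)+1)/n ≤ Real.exp (1/n) := by
        have := Real.add_one_le_exp (1/(n:ℝ))
        calc ((n:ℝ)+1)/n = 1/n + 1 := by field_simp; ring
          _ ≤ Real.exp (1/n) := by linarith
      have h2 : (((n:ℝ)+1)/n) ^ n ≤ 3 := by
        calc (((n:ℝ)+1)/n) ^ n ≤ (Real.exp (1/n)) ^ n := by
              apply pow_le_pow_left₀ (by positivity) h1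
          _ = Real.exp ((1/n) * n) := by rw [← Real.exp_nat_mul]; ring_nf
          _ = Real.exp 1 := by field_simp
          _ ≤ 3 := by linarith [Real.exp_one_lt_d9]
      have key : ((n:ℝ)+1) ^ n ≤ 3 * (n:ℝ) ^ n := by
        have := mul_le_mul_of_nonneg_right h2 (by positivity : (0:ℝ) ≤ (n:ℝ)^n)
        calc ((n:ℝ)+1) ^ n = (((n:ℝ)+1)/n) ^ n * (n:ℝ)^n := by
              rw [div_pow]; field_simp
          _ ≤ 3 * (n:ℝ)^n := this
      have : ((n:ℝ)+1) ^ (n+1) ≤ 3 * (n:ℝ)^n * ((n:ℝ)+1) := by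
        rw [pow_succ]
        exact mul_le_mul_of_nonneg_right key (by positivity)
      calc ((n+1 : ℕ) : ℝ) ^ (n+1) = ((n:ℝ)+1) ^ (n+1) := by push_cast; ring_nf
        _ ≤ 3 * (n:ℝ)^n * ((n:ℝ)+1) := this
        _ ≤ 3 * (3 ^ n * n.factorial) * ((n:ℝ)+1) := by
              apply mul_le_mul_of_nonneg_right (by linarith) (by positivity)
        _ = 3 ^ (n+1) * ((n+1).factorial : ℝ) := by
              rw [Nat.factorial_succ]; push_cast; ring

lemma l0_choose_mono {M k w : ℕ} (hk : k ≤ w) (hw : 2 * w ≤ M) :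
    M.choose k ≤ M.choose w := by
  induction hk using Nat.decreasingInduction with
  | self => exact le_refl _
  | of_succ j hj ih =>
      refine le_trans (Nat.choose_le_succ_of_lt_half_left ?_) ih
      omega

lemma l0_card_low_weight {M N w : ℕ} (A : Fin M → Fin N → Bool)
    (hinj : Function.Injective (fun j => fun i => A i j)) :
    (univ.filter fun j : Fin N =>
        (univ.filter fun i => A i j = true).card ≤ w).card
      ≤ ∑ k ∈ range (w+1), M.choose k := by
  set f : Fin N → Finset (Fin M) := fun j => univ.filter fun i => A i j = true with hf
  have hmem : ∀ j i, i ∈ f j ↔ A i j = true := by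
    intro j i; simp [hf]
  have hfinj : Function.Injective f := by
    intro j j' h
    apply hinj
    funext i
    have := congrArg (fun s => i ∈ s) h
    simp only [hmem, eq_iff_iff] at this
    cases hA : A i j <;> cases hA' : A i j' <;> simp_all
  have hsub : ∀ j ∈ (univ.filter fun j : Fin N => (f j).card ≤ w),
      f j ∈ (range (w+1)).biUnion (fun k => powersetCard k (univ : Finset (Fin M))) := by
    intro j hj
    simp only [mem_filter, mem_univ, true_and] at hj
    simp only [mem_biUnion, mem_range, mem_powersetCard]
    exact ⟨(f j).card, by omega, subset_univ _, rfl⟩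
  calc (univ.filter fun j : Fin N => (f j).card ≤ w).card
      ≤ ((range (w+1)).biUnion (fun k => powersetCard k (univ : Finset (Fin M)))).card :=
        card_le_card_of_injOn f hsub (fun a _ b _ h => hfinj h)
    _ ≤ ∑ k ∈ range (w+1), (powersetCard k (univ : Finset (Fin M))).card := card_biUnion_le
    _ = ∑ k ∈ range (w+1), M.choose k := by
        refine Finset.sum_congr rfl fun k _ => ?_
        rw [card_powersetCard, card_univ, Fintype.card_fin]

lemma l0cost_eq_sum (M N : ℕ) (A : Fin M → Fin N → Bool) :
    l0cost M N A = ∑ j : Fin N, (univ.filter fun i => A i j = true).card := by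
  unfold l0cost
  rw [card_filter, Fintype.sum_prod_type]
  rw [Finset.sum_comm]
  refine Finset.sum_congr rfl fun j _ => ?_
  rw [card_filter]

lemma l0_key {M N w : ℕ} (hw : 2 * w ≤ M) (A : Fin M → Fin N → Bool)
    (hinj : Function.Injective (fun j => fun i => A i j)) :
    (N - (w+1) * M.choose w) * (w + 1) ≤ l0cost M N A := by
  classical
  set wt : Fin N → ℕ := fun j => (univ.filter fun i => A i j = true).card with hwt
  set Bad : Finset (Fin N) := univ.filter fun j => wt j ≤ w with hBad
  have hBadcard : Bad.card ≤ (w+1) * M.choose w := by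
    calc Bad.card ≤ ∑ k ∈ range (w+1), M.choose k := l0_card_low_weight A hinj
      _ ≤ ∑ _k ∈ range (w+1), M.choose w := by
          refine Finset.sum_le_sum fun k hk => ?_
          exact l0_choose_mono (by simp at hk; omega) hw
      _ = (w+1) * M.choose w := by rw [Finset.sum_const, card_range, smul_eq_mul]
  have hGood : N - (w+1) * M.choose w ≤ Badᶜ.card := by
    have : Badᶜ.card = N - Bad.card := by
      rw [Finset.card_compl, Fintype.card_fin]
    omega
  calc (N - (w+1) * M.choose w) * (w + 1) ≤ Badᶜ.card * (w+1) :=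
        Nat.mul_le_mul_right _ hGood
    _ ≤ ∑ j ∈ Badᶜ, wt j := by
        calc Badᶜ.card * (w+1) = ∑ _j ∈ Badᶜ, (w+1) := by
              rw [Finset.sum_const, smul_eq_mul]
          _ ≤ ∑ j ∈ Badᶜ, wt j := ?_
        refine Finset.sum_le_sum fun j hj => ?_
        simp only [hBad, Finset.mem_compl, mem_filter, mem_univ, true_and, not_le] at hj
        omega
    _ ≤ ∑ j : Fin N, wt j := Finset.sum_le_sum_of_subset (Finset.subset_univ _)
    _ = l0cost M N A := (l0cost_eq_sum M N A).symm

lemma l0_ev_sqrt : ∀ᶠ x : ℝ in Filter.atTop, 2 * (Real.logb 2 x + 1) ≤ Real.sqrt x := by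
  have hlo : Real.log =o[Filter.atTop] fun x : ℝ => x ^ ((1:ℝ)/2) :=
    isLittleO_log_rpow_atTop (by norm_num)
  have htend := hlo.tendsto_div_nhds_zero
  have hev1 : ∀ᶠ x : ℝ in Filter.atTop, Real.log x / x ^ ((1:ℝ)/2) < 1/6 :=
    htend.eventually (gt_mem_nhds (by norm_num))
  filter_upwards [hev1, Filter.eventually_ge_atTop (36:ℝ)] with x hx h36
  have hx0 : (0:ℝ) < x := by linarith
  have hrw : x ^ ((1:ℝ)/2) = Real.sqrt x := (Real.sqrt_eq_rpow x).symm
  rw [hrw] at hx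
  have hs0 : (0:ℝ) < Real.sqrt x := Real.sqrt_pos.mpr hx0
  have hs6 : (6:ℝ) ≤ Real.sqrt x := by
    have := Real.sqrt_le_sqrt h36
    rwa [show Real.sqrt 36 = 6 by
      rw [show (36:ℝ) = 6^2 by norm_num, Real.sqrt_sq (by norm_num)]] at this
  have hlog : Real.log x ≤ Real.sqrt x / 6 := by
    rw [div_lt_iff₀ hs0] at hx; linarith
  have hlogb : Real.logb 2 x ≤ 2 * Real.log x := by
    rw [Real.logb, div_le_iff₀ (Real.log_pos one_lt_two)]
    nlinarith [Real.log_two_gt_d9, Real.log_nonneg (by linarith : (1:ℝ) ≤ x)]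
  nlinarith

set_option maxHeartbeats 1600000 in
theorem nonadaptive_l0_lower_bound (T : ℝ) (hT : 1 < T) :
    ∃ C : ℝ, 0 < C ∧ ∃ N₀ : ℕ, ∀ N : ℕ, N₀ ≤ N →
      ∀ A : Fin ⌈T * Real.logb 2 N⌉₊ → Fin N → Bool,
        (∀ j, ∃ i, A i j = true) →
        Function.Injective (fun j => fun i => A i j) →
        C * N * Real.logb 2 N ≤ (l0cost ⌈T * Real.logb 2 N⌉₊ N A : ℝ) := by
  have hT0 : (0:ℝ) < T := by linarith
  obtain ⟨K, hK3, hKpow⟩ : ∃ K : ℕ, 3 ≤ K ∧ (13*T*K)^2 ≤ (2:ℝ)^K := by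
    have h0 : (0:ℝ) < 1/(169*T^2) := by positivity
    have htd := tendsto_pow_const_div_const_pow_of_one_lt 2 (by norm_num : (1:ℝ) < 2)
    have hev : ∀ᶠ n : ℕ in Filter.atTop, (n:ℝ)^2 / 2^n < 1/(169*T^2) :=
      htd.eventually (gt_mem_nhds h0)
    obtain ⟨K, hK3, hK⟩ := ((Filter.eventually_ge_atTop 3).and hev).exists
    refine ⟨K, hK3, ?_⟩
    have h2K : (0:ℝ) < 2^K := by positivity
    rw [div_lt_div_iff₀ h2K (by positivity)] at hK
    nlinarith [hK, sq_nonneg ((K:ℝ)*T)]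
  have hK0 : (0:ℝ) < K := by exact_mod_cast (by omega : 0 < K)
  have hK3' : (3:ℝ) ≤ K := by exact_mod_cast hK3
  refine ⟨1/(2*K), by positivity, ?_⟩
  have hLtend : Filter.Tendsto (fun N : ℕ => Real.logb 2 N) Filter.atTop Filter.atTop :=
    (Real.tendsto_logb_atTop one_lt_two).comp tendsto_natCast_atTop_atTop
  have ev1 : ∀ᶠ N : ℕ in Filter.atTop, 2*(K:ℝ) ≤ Real.logb 2 N :=
    hLtend.eventually_ge_atTop _
  have ev2 : ∀ᶠ N : ℕ in Filter.atTop, 2 * (Real.logb 2 N + 1) ≤ Real.sqrt N :=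
    tendsto_natCast_atTop_atTop.eventually l0_ev_sqrt
  obtain ⟨N₀, hN₀⟩ := Filter.eventually_atTop.mp
    ((ev1.and ev2).and (Filter.eventually_ge_atTop 2))
  refine ⟨N₀, fun N hN => ?_⟩
  obtain ⟨⟨h1, h2⟩, hN2⟩ := hN₀ N hN
  set L : ℝ := Real.logb 2 N with hLdef
  set Mn : ℕ := ⌈T * L⌉₊ with hMndef
  intro A _ hinj
  have hL6 : 6 ≤ L := by nlinarith
  have hL0 : 0 < L := by linarith
  set w : ℕ := ⌊L / K⌋₊ with hwdef
  have hLw1 : (w:ℝ) ≤ L / K := Nat.floor_le (by positivity)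
  have hLw2 : L / K < (w:ℝ) + 1 := Nat.lt_floor_add_one _
  have hLK2 : (2:ℝ) ≤ L / K := by rw [le_div_iff₀ hK0]; linarith
  have hw1 : 1 ≤ w := by
    have : (1:ℕ) ≤ ⌊L / K⌋₊ := Nat.le_floor (by push_cast; linarith)
    omega
  have hw0 : (0:ℝ) < w := by exact_mod_cast hw1
  have hM1 : T * L ≤ (Mn:ℝ) := Nat.le_ceil _
  have hM2 : (Mn:ℝ) ≤ T * L + 1 := le_of_lt (Nat.ceil_lt_add_one (by positivity))
  have hKw : L - K ≤ K * w := by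
    rw [div_lt_iff₀ hK0] at hLw2; nlinarith
  have hKwL : (K:ℝ) * w ≤ L := by
    rw [← le_div_iff₀' hK0]; exact hLw1
  have hw_le : 2 * w ≤ Mn := by
    have hr : (2*w : ℝ) ≤ (Mn:ℝ) := by nlinarith
    exact_mod_cast hr
  set B : ℝ := 13*T*K with hBdef
  have hB0 : 0 < B := by positivity
  have hB3 : 3*(Mn:ℝ) ≤ B * w := by
    nlinarith [mul_le_mul_of_nonneg_left hKw (by linarith : (0:ℝ) ≤ 13*T)]
  have hchoose : (Mn.choose w : ℝ) ≤ B^w := by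
    have c1 : (Mn.choose w : ℝ) ≤ (Mn:ℝ)^w / w.factorial := Nat.choose_le_pow_div w Mn
    have hfac : (0:ℝ) < w.factorial := by exact_mod_cast w.factorial_pos
    have c2 : (Mn:ℝ)^w / w.factorial ≤ (3*(Mn:ℝ)/w)^w := by
      rw [div_pow, mul_pow, div_le_div_iff₀ hfac (by positivity)]
      calc (Mn:ℝ)^w * w^w ≤ (Mn:ℝ)^w * (3^w * w.factorial) :=
            mul_le_mul_of_nonneg_left (l0_aux_pow_le w) (by positivity)
        _ = 3^w * (Mn:ℝ)^w * w.factorial := by ring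
    have c3 : (3*(Mn:ℝ)/w)^w ≤ B^w := by
      apply pow_le_pow_left₀ (by positivity)
      rw [div_le_iff₀ hw0]; linarith
    linarith
  have hN0 : (0:ℝ) < N := by exact_mod_cast (by omega : 0 < N)
  have hBw : B^w ≤ Real.sqrt N := by
    have hsq : (B^w)^2 ≤ (N:ℝ) := by
      have e1 : (B^w)^2 = (B^2)^w := by
        rw [← pow_mul, ← pow_mul, Nat.mul_comm]
      have e2 : (B^2)^w ≤ ((2:ℝ)^K)^w := pow_le_pow_left₀ (by positivity) hKpow w
      have e4 : ((2:ℝ)^K)^w ≤ (N:ℝ) := by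
        rw [← pow_mul]
        have : (2:ℝ)^(K*w) = (2:ℝ)^(((K*w : ℕ):ℝ)) := (Real.rpow_natCast 2 (K*w)).symm
        rw [this]
        calc (2:ℝ)^(((K*w : ℕ):ℝ)) ≤ (2:ℝ)^L := by
              apply Real.rpow_le_rpow_of_exponent_le one_le_two
              push_cast; exact hKwL
          _ = N := Real.rpow_logb two_pos (by norm_num) hN0
      calc (B^w)^2 = (B^2)^w := e1
        _ ≤ ((2:ℝ)^K)^w := e2
        _ ≤ N := e4
    exact (Real.le_sqrt (by positivity) (by positivity)).mpr hsq
  have hwL : ((w:ℝ)+1) ≤ Real.sqrt N / 2 := by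
    have hwle : (w:ℝ) ≤ L := by
      have h3L : L ≤ L * K := by nlinarith
      have : L / K ≤ L := by rw [div_le_iff₀ hK0]; linarith
      linarith [hLw1]
    linarith
  have hS : (((w+1) * Mn.choose w : ℕ) : ℝ) ≤ (N:ℝ)/2 := by
    push_cast
    calc ((w:ℝ)+1) * (Mn.choose w : ℝ) ≤ (Real.sqrt N / 2) * Real.sqrt N :=
          mul_le_mul hwL (le_trans hchoose hBw) (by positivity) (by positivity)
      _ = (N:ℝ)/2 := by
          rw [div_mul_eq_mul_div, Real.mul_self_sqrt (by positivity)]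
  have hSN : (w+1) * Mn.choose w ≤ N := by
    have h' : (((w+1) * Mn.choose w : ℕ) : ℝ) ≤ (N:ℝ) := by
      calc (((w+1) * Mn.choose w : ℕ) : ℝ) ≤ (N:ℝ)/2 := hS
        _ ≤ N := by linarith
    exact_mod_cast h'
  have key := l0_key hw_le A hinj
  have keyR : (((N - (w+1) * Mn.choose w) * (w + 1) : ℕ) : ℝ) ≤ (l0cost Mn N A : ℝ) :=
    Nat.cast_le.mpr key
  have hcast : (((N - (w+1) * Mn.choose w) * (w + 1) : ℕ) : ℝ)
      = ((N:ℝ) - (((w+1) * Mn.choose w : ℕ) : ℝ)) * ((w:ℝ)+1) := by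
    rw [Nat.cast_mul, Nat.cast_sub hSN]; push_cast; ring
  rw [hcast] at keyR
  calc (1/(2*(K:ℝ))) * N * L = ((N:ℝ)/2) * (L/K) := by field_simp
    _ ≤ ((N:ℝ) - (((w+1) * Mn.choose w : ℕ) : ℝ)) * ((w:ℝ)+1) := by
        apply mul_le_mul (by linarith) (le_of_lt hLw2) (by positivity) (by linarith)
    _ ≤ (l0cost Mn N A : ℝ) := keyR
end

section
/- Fix T > 1 and let M = ⌈T·log₂ N⌉. Define r₀ by ∑_{l=1}^{r₀} C(M,l) < N ≤ ∑_{l=1}^{r₀+1} C(M,l). Then there is a constant η > 0 (depending only on T) such that r₀ ≥ η·M for all sufficiently large N. -/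
open Real Finset

set_option maxHeartbeats 1600000 in
theorem threshold_weight_linear (T : ℝ) (hT : 1 < T) :
    ∃ η : ℝ, 0 < η ∧ ∃ N₀ : ℕ, ∀ N : ℕ, N₀ ≤ N →
      ∀ r₀ : ℕ,
        (∑ l ∈ Finset.Icc 1 r₀, (⌈T * Real.logb 2 N⌉₊).choose l < N) →
        (N ≤ ∑ l ∈ Finset.Icc 1 (r₀ + 1), (⌈T * Real.logb 2 N⌉₊).choose l) →
        η * (⌈T * Real.logb 2 N⌉₊ : ℝ) ≤ (r₀ : ℝ) := by
  have hT0 : (0:ℝ) < T := by linarith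
  have h2T : (0:ℝ) < 1 / (2 * T) := by positivity
  -- choose η small
  obtain ⟨η, hη0, hη2, hc⟩ : ∃ η : ℝ, 0 < η ∧ η < 1/2 ∧
      Real.log (1 + 2*η) - 2*η * Real.log (2*η) < Real.log 2 / (2*T) := by
    have hcont : ContinuousAt
        (fun x : ℝ => Real.log (1 + 2*x) - (2*x) * Real.log (2*x)) 0 := by
      apply ContinuousAt.sub
      · exact (Real.continuousAt_log (by norm_num)).comp (by fun_prop)
      · exact (Real.continuous_mul_log.comp (continuous_const.mul continuous_id)).continuousAt
    have hval : Real.log (1 + 2*(0:ℝ)) - (2*(0:ℝ)) * Real.log (2*(0:ℝ)) = 0 := by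
      norm_num
    have htend := hcont.tendsto
    rw [hval] at htend
    have hpos : (0:ℝ) < Real.log 2 / (2*T) := by
      have := Real.log_pos (by norm_num : (1:ℝ) < 2)
      positivity
    have hev : ∀ᶠ x : ℝ in nhds 0,
        Real.log (1 + 2*x) - (2*x) * Real.log (2*x) < Real.log 2 / (2*T) :=
      htend.eventually (Filter.Tendsto.eventually_lt_const hpos Filter.tendsto_id) |>.mono
        (fun x hx => hx)
    obtain ⟨ε, hε0, hε⟩ := Metric.eventually_nhds_iff.mp hev
    refine ⟨min (ε/2) (1/4), by positivity, ?_, ?_⟩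
    · exact lt_of_le_of_lt (min_le_right _ _) (by norm_num)
    · have h1 : |min (ε/2) (1/4) - 0| < ε := by
        rw [sub_zero, abs_of_pos (by positivity)]
        calc min (ε/2) (1/4) ≤ ε/2 := min_le_left _ _
        _ < ε := by linarith
      have := hε h1
      linarith [this]
  refine ⟨η, hη0, 2 ^ (⌈1/η⌉₊ + 2), ?_⟩
  intro N hN r₀ _h1 h2
  set M := ⌈T * Real.logb 2 N⌉₊ with hM
  -- basic facts
  have hN4 : (4:ℕ) ≤ N := le_trans (by
    calc (4:ℕ) = 2^2 := by norm_num
    _ ≤ 2 ^ (⌈1/η⌉₊ + 2) := Nat.pow_le_pow_right (by norm_num) (by omega)) hN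
  have hNR : (4:ℝ) ≤ (N:ℝ) := by exact_mod_cast hN4
  have hNpos : (0:ℝ) < (N:ℝ) := by linarith
  have hlogN : ((⌈1/η⌉₊ : ℝ) + 2) ≤ Real.logb 2 N := by
    have : ((2:ℝ)) ^ ((⌈1/η⌉₊ : ℕ) + 2) ≤ (N:ℝ) := by
      have : ((2:ℕ) ^ (⌈1/η⌉₊ + 2) : ℝ) ≤ (N:ℝ) := by exact_mod_cast hN
      simpa using this
    have h := Real.logb_le_logb_of_le (b := 2) (by norm_num) (by positivity : (0:ℝ) < 2 ^ (⌈1/η⌉₊ + 2)) this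
    rwa [show ((2:ℝ)) ^ ((⌈1/η⌉₊ : ℕ) + 2) = (2:ℝ) ^ (((⌈1/η⌉₊ : ℝ) + 2) : ℝ) by
        rw [← Real.rpow_natCast]; norm_num,
      Real.logb_rpow (by norm_num) (by norm_num)] at h
  have hlogN0 : (0:ℝ) ≤ Real.logb 2 N := by
    have : (0:ℝ) ≤ (⌈1/η⌉₊ : ℝ) := Nat.cast_nonneg _
    linarith
  have hTlog : Real.logb 2 N ≤ T * Real.logb 2 N := by nlinarith
  have hMge : ((⌈1/η⌉₊ : ℝ) + 2) ≤ (M:ℝ) := le_trans (le_trans hlogN hTlog) (Nat.le_ceil _)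
  have hetaM : 1/η + 2 ≤ (M:ℝ) := le_trans (by linarith [Nat.le_ceil (1/η)]) hMge
  have hM2 : (2:ℝ) ≤ (M:ℝ) := by
    have : (0:ℝ) < 1/η := by positivity
    linarith
  have hMub : (M:ℝ) < T * Real.logb 2 N + 1 := Nat.ceil_lt_add_one (by positivity)
  -- case split
  rcases le_or_gt (η * (M:ℝ)) (r₀:ℝ) with h | habs
  · exact h
  exfalso
  have hr₀M : (r₀:ℝ) < η * M := habs
  have hηM1 : (1:ℝ) ≤ η * M := by
    have := mul_le_mul_of_nonneg_left hetaM (le_of_lt hη0)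
    rw [mul_add, mul_one_div, div_self (ne_of_gt hη0)] at this
    linarith [mul_pos hη0 (by norm_num : (0:ℝ) < 2)]
  have hkM : (r₀:ℝ) + 1 ≤ 2 * η * M := by linarith
  -- r₀ + 1 ≤ M
  have hr₀ltM : r₀ + 1 ≤ M := by
    by_contra hcon
    push_neg at hcon
    have : (M:ℝ) ≤ (r₀:ℝ) := by exact_mod_cast Nat.lt_succ_iff.mp hcon
    nlinarith
  set x : ℝ := 2 * η with hx
  have hx0 : 0 < x := by positivity
  have hx1 : x ≤ 1 := by rw [hx]; linarith
  set k := r₀ + 1 with hk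
  -- Step A: N * x^k ≤ (1+x)^M
  have hA : (N:ℝ) * x ^ k ≤ (1 + x) ^ M := by
    have hsum : (N:ℝ) ≤ ∑ l ∈ Finset.Icc 1 k, ((M.choose l : ℕ) : ℝ) := by
      exact_mod_cast h2
    have step1 : (N:ℝ) * x ^ k ≤ ∑ l ∈ Finset.Icc 1 k, ((M.choose l : ℝ)) * x ^ l := by
      calc (N:ℝ) * x ^ k ≤ (∑ l ∈ Finset.Icc 1 k, ((M.choose l : ℕ) : ℝ)) * x ^ k :=
            mul_le_mul_of_nonneg_right hsum (by positivity)
      _ = ∑ l ∈ Finset.Icc 1 k, ((M.choose l : ℝ)) * x ^ k := by rw [Finset.sum_mul]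
      _ ≤ ∑ l ∈ Finset.Icc 1 k, ((M.choose l : ℝ)) * x ^ l := by
          apply Finset.sum_le_sum
          intro l hl
          have hlk : l ≤ k := (Finset.mem_Icc.mp hl).2
          exact mul_le_mul_of_nonneg_left
            (pow_le_pow_of_le_one (le_of_lt hx0) hx1 hlk) (by positivity)
    have step2 : ∑ l ∈ Finset.Icc 1 k, ((M.choose l : ℝ)) * x ^ l
        ≤ ∑ l ∈ Finset.range (M+1), ((M.choose l : ℝ)) * x ^ l := by
      apply Finset.sum_le_sum_of_subset_of_nonneg
      · intro l hl
        simp only [Finset.mem_Icc] at hl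
        simp only [Finset.mem_range]
        omega
      · intro l _ _
        positivity
    have step3 : ∑ l ∈ Finset.range (M+1), ((M.choose l : ℝ)) * x ^ l = (1 + x) ^ M := by
      rw [add_comm (1:ℝ) x, add_pow]
      apply Finset.sum_congr rfl
      intro l _
      ring
    linarith
  -- take logs
  have hlog1 : Real.log ((N:ℝ) * x ^ k) = Real.log N + k * Real.log x := by
    rw [Real.log_mul (ne_of_gt hNpos) (by positivity), Real.log_pow]
  have hlog2 : Real.log ((1 + x) ^ M) = M * Real.log (1 + x) := Real.log_pow _ _
  have hlogle : Real.log N + k * Real.log x ≤ M * Real.log (1 + x) := by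
    rw [← hlog1, ← hlog2]
    exact Real.log_le_log (by positivity) hA
  have hlogxneg : Real.log x ≤ 0 := Real.log_nonpos (le_of_lt hx0) hx1
  have hklogx : x * M * Real.log x ≤ (k:ℝ) * Real.log x := by
    have hkk : (k:ℝ) ≤ x * M := by push_cast [hk]; linarith
    exact mul_le_mul_of_nonpos_right hkk hlogxneg
  have hkey : Real.log N ≤ M * (Real.log (1 + x) - x * Real.log x) := by
    have h5 : Real.log N + x * M * Real.log x ≤ M * Real.log (1 + x) := by
      linarith
    have h6 : (M:ℝ) * (Real.log (1 + x) - x * Real.log x)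
        = M * Real.log (1 + x) - x * M * Real.log x := by ring
    linarith
  -- lower bound on log N
  have hlogN_lb : ((M:ℝ) - 1) / T * Real.log 2 ≤ Real.log N := by
    have h1 : ((M:ℝ) - 1) / T ≤ Real.logb 2 N := by
      rw [div_le_iff₀ hT0]
      nlinarith
    have := mul_le_mul_of_nonneg_right h1 (le_of_lt (Real.log_pos (by norm_num : (1:ℝ) < 2)))
    rwa [Real.logb, div_mul_cancel₀] at this
    exact ne_of_gt (Real.log_pos (by norm_num))
  -- combine
  clear_value M
  have hcval : Real.log (1 + x) - x * Real.log x < Real.log 2 / (2*T) := hc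
  have hlog2pos : (0:ℝ) < Real.log 2 := Real.log_pos (by norm_num)
  have hMpos : (0:ℝ) < (M:ℝ) := by linarith
  have : ((M:ℝ) - 1) / T * Real.log 2 ≤ M * (Real.log (1 + x) - x * Real.log x) :=
    le_trans hlogN_lb hkey
  have hfin : ((M:ℝ) - 1) / T * Real.log 2 < M * (Real.log 2 / (2*T)) := by
    calc ((M:ℝ) - 1) / T * Real.log 2 ≤ M * (Real.log (1 + x) - x * Real.log x) := this
    _ < M * (Real.log 2 / (2*T)) := by
        exact mul_lt_mul_of_pos_left hcval hMpos
  rw [div_mul_eq_mul_div, div_lt_iff₀ hT0] at hfin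
  have : (M:ℝ) * (Real.log 2 / (2*T)) * T = M * Real.log 2 / 2 := by
    rw [mul_assoc, div_mul_eq_mul_div, mul_comm (2:ℝ) T, ← div_div,
      mul_div_cancel_right₀ _ hT0.ne', ← mul_div_assoc]
  rw [this] at hfin
  have hhint : (0:ℝ) ≤ ((M:ℝ) - 2) * Real.log 2 :=
    mul_nonneg (by linarith) hlog2pos.le
  nlinarith
end
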